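/- arXiv:2104.07641 — 5 statements merged into one kernel-verified Lean document; each statement's English description precedes it below -/
import Mathlib

section
/- The set of singular vectors in ℝ^m has Lebesgue measure zero, where x ∈ ℝ^m is singular if for every c > 0 and all sufficiently large T there exist p ∈ ℤ and nonzero q ∈ ℤ^m with |q · x + p| < c/T^m and ‖q‖_∞ ≤ T. -/
open scoped BigOperators
open MeasureTheory

/-!
Cover `ℝ^m` by unit cubes and fix `c > 0`. For every large integer `n`, a singular vector in a
cube lies in the union, over the nonzero `q ∈ [-n, n]^m`, of the slabs where `q · x` is within
`c / n^m` of an integer. Inside a unit cube such a slab has measure `O_m(c / n^m)`: taking as new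
coordinate the linear form in place of the coordinate where `|q i|` is largest, the Jacobian
`|q i|` compensates the length `O_m(|q i|)` of the range of the form on the cube. There are at
most `(2n + 1)^m ≤ 3^m n^m` such `q`, so the singular vectors in a cube have measure `O_m(c)`
for every `c > 0`.
-/

open scoped ENNReal
open Set Filter Topology

def nearIntegers (ε : ℝ) : Set ℝ := {t | ∃ p : ℤ, |t + p| < ε}

lemma Icc_inter_nearIntegers_subset (a b ε : ℝ) :
    Icc a b ∩ nearIntegers ε ⊆ ⋃ k ∈ Finset.Icc ⌈a - ε⌉ ⌊b + ε⌋, Metric.ball (k : ℝ) ε := by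
  rintro t ⟨⟨hat, htb⟩, p, hp⟩
  have hdist : |t - ((-p : ℤ) : ℝ)| < ε := by push_cast; simpa [sub_neg_eq_add] using hp
  rw [abs_lt] at hdist
  refine mem_biUnion (x := -p) ?_ (by rw [Metric.mem_ball, Real.dist_eq]; exact abs_lt.2 hdist)
  rw [Finset.mem_coe, Finset.mem_Icc, Int.ceil_le, Int.le_floor]
  constructor <;> linarith

lemma volume_Icc_inter_nearIntegers_le {a b ε : ℝ} (hab : a ≤ b) (hε : 0 ≤ ε) :
    volume (Icc a b ∩ nearIntegers ε) ≤ ENNReal.ofReal ((b - a + 2 * ε + 1) * (2 * ε)) := by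
  have hcard : ((Finset.Icc ⌈a - ε⌉ ⌊b + ε⌋).card : ℝ) ≤ b - a + 2 * ε + 1 := by
    have hle : ⌈a - ε⌉ ≤ ⌊b + ε⌋ + 1 := by
      have := Int.ceil_le_floor_add_one (a - ε)
      have := Int.floor_mono (show a - ε ≤ b + ε by linarith)
      omega
    have hcast : ((Finset.Icc ⌈a - ε⌉ ⌊b + ε⌋).card : ℝ) = ⌊b + ε⌋ + 1 - ⌈a - ε⌉ := by
      exact_mod_cast Int.card_Icc_of_le _ _ hle
    rw [hcast]
    linarith [Int.floor_le (b + ε), Int.le_ceil (a - ε)]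
  calc volume (Icc a b ∩ nearIntegers ε)
      ≤ ∑ k ∈ Finset.Icc ⌈a - ε⌉ ⌊b + ε⌋, volume (Metric.ball (k : ℝ) ε) :=
        (measure_mono (Icc_inter_nearIntegers_subset a b ε)).trans (measure_biUnion_finset_le _ _)
    _ = ENNReal.ofReal ((Finset.Icc ⌈a - ε⌉ ⌊b + ε⌋).card * (2 * ε)) := by
        rw [Finset.sum_congr rfl fun k _ => Real.volume_ball _ _, Finset.sum_const, nsmul_eq_mul,
          ENNReal.ofReal_mul (Nat.cast_nonneg _), ENNReal.ofReal_natCast]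
    _ ≤ ENNReal.ofReal ((b - a + 2 * ε + 1) * (2 * ε)) := by gcongr

lemma Matrix.det_one_updateRow {ι R : Type*} [Fintype ι] [DecidableEq ι] [CommRing R] (i : ι)
    (q : ι → R) : ((1 : Matrix ι ι R).updateRow i q).det = q i := by
  have hq : q = ∑ k, q k • (1 : Matrix ι ι R) k := by
    ext l
    simp [Matrix.one_apply]
  rw [hq, Matrix.det_updateRow_sum]
  simp [Matrix.one_apply]

lemma volume_preimage_update_pi {ι : Type*} [Fintype ι] [DecidableEq ι] {q : ι → ℝ} {i : ι}
    (hi : q i ≠ 0) (t : ι → Set ℝ) :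
    volume ((fun x => Function.update x i (∑ j, q j * x j)) ⁻¹' univ.pi t) =
      ENNReal.ofReal |q i|⁻¹ * ∏ j, volume (t j) := by
  have hf : (fun x => Function.update x i (∑ j, q j * x j)) =
      Matrix.toLin' ((1 : Matrix ι ι ℝ).updateRow i q) := by
    ext x j
    rcases eq_or_ne j i with rfl | hj
    · simp [Matrix.mulVec, dotProduct]
    · simp [Matrix.mulVec, dotProduct, hj, Matrix.one_apply]
  have hdet : LinearMap.det (Matrix.toLin' ((1 : Matrix ι ι ℝ).updateRow i q)) = q i := by
    rw [LinearMap.det_toLin', Matrix.det_one_updateRow]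
  rw [hf, Measure.addHaar_preimage_linearMap _ (hdet ▸ hi), volume_pi_pi, hdet, abs_inv]

lemma measure_le_of_subset_iUnion_iInter {α : Type*} [MeasurableSpace α] {μ : Measure α}
    {s : Set α} {G : ℕ → Set α} {b : ℝ≥0∞} (hs : s ⊆ ⋃ N, ⋂ n ≥ N, G n)
    (hG : ∃ᶠ n in atTop, μ (G n) ≤ b) : μ s ≤ b := by
  have hmono : Monotone fun N => ⋂ n ≥ N, G n := fun N N' hN =>
    biInter_mono (fun n hn => hN.trans hn) fun _ _ => subset_rfl
  refine (measure_mono hs).trans ?_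
  rw [hmono.measure_iUnion]
  refine iSup_le fun N => ?_
  obtain ⟨n, hn, hGn⟩ := frequently_atTop.1 hG N
  exact (measure_mono (biInter_subset_of_mem hn)).trans hGn

lemma ENNReal.eq_zero_of_forall_le_ofReal_mul {x : ℝ≥0∞} {C : ℝ}
    (h : ∀ c : ℝ, 0 < c → c ≤ 1 → x ≤ ENNReal.ofReal (C * c)) : x = 0 := by
  have hlim : Tendsto (fun c => ENNReal.ofReal (C * c)) (𝓝[>] 0) (𝓝 0) := by
    have := (ENNReal.continuous_ofReal.comp (continuous_const_mul C)).tendsto 0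
    simpa [Function.comp_def] using this.mono_left nhdsWithin_le_nhds
  refine nonpos_iff_eq_zero.1 (ge_of_tendsto hlim ?_)
  filter_upwards [Ioo_mem_nhdsGT one_pos] with c hc
  exact h c hc.1 hc.2.le

section UnitCube

variable {ι : Type*}

def unitCube (z : ι → ℤ) : Set (ι → ℝ) := univ.pi fun j => Ico (z j : ℝ) (z j + 1)

lemma iUnion_unitCube : ⋃ z : ι → ℤ, unitCube z = univ :=
  eq_univ_of_forall fun x => mem_iUnion.2
    ⟨fun j => ⌊x j⌋, fun _ _ => ⟨Int.floor_le _, Int.lt_floor_add_one _⟩⟩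

lemma abs_sum_mul_sub_le_of_mem_unitCube [Fintype ι] {z : ι → ℤ} {x : ι → ℝ}
    (hx : x ∈ unitCube z) (q : ι → ℝ) : |∑ j, q j * x j - ∑ j, q j * z j| ≤ ∑ j, |q j| := by
  rw [← Finset.sum_sub_distrib]
  refine (Finset.abs_sum_le_sum_abs _ _).trans (Finset.sum_le_sum fun j _ => ?_)
  obtain ⟨hzx, hxz⟩ := hx j (mem_univ j)
  rw [← mul_sub, abs_mul]
  exact mul_le_of_le_one_right (abs_nonneg _) (abs_le.2 ⟨by linarith, by linarith⟩)

lemma volume_unitCube_inter_nearIntegers_le [Fintype ι] {q : ι → ℤ} (hq : q ≠ 0) (z : ι → ℤ)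
    {ε : ℝ} (hε₀ : 0 ≤ ε) (hε₁ : ε ≤ 1) :
    volume (unitCube z ∩ {x | ∑ j, (q j : ℝ) * x j ∈ nearIntegers ε}) ≤
      ENNReal.ofReal ((2 * Fintype.card ι + 3) * (2 * ε)) := by
  classical
  obtain ⟨j, hj⟩ := Function.ne_iff.1 hq
  have : Nonempty ι := ⟨j⟩
  obtain ⟨i, hi⟩ := Finite.exists_max fun j => |q j|
  have hqi : (1 : ℝ) ≤ |(q i : ℝ)| := by exact_mod_cast (Int.one_le_abs hj).trans (hi j)
  set L := ∑ j, |(q j : ℝ)|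
  set A := ∑ j, (q j : ℝ) * z j
  have hL : L ≤ Fintype.card ι * |(q i : ℝ)| := by
    simpa using Finset.sum_le_sum fun j (_ : j ∈ Finset.univ) =>
      (show |(q j : ℝ)| ≤ |(q i : ℝ)| by exact_mod_cast hi j)
  have hsub : unitCube z ∩ {x | ∑ j, (q j : ℝ) * x j ∈ nearIntegers ε} ⊆
      (fun x => Function.update x i (∑ j, (q j : ℝ) * x j)) ⁻¹'
        univ.pi (Function.update (fun j => Ico (z j : ℝ) (z j + 1)) i
          (Icc (A - L) (A + L) ∩ nearIntegers ε)) := by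
    rintro x ⟨hx, hnear⟩ j -
    rcases eq_or_ne j i with rfl | hj
    · have hA := abs_sub_le_iff.1 (abs_sum_mul_sub_le_of_mem_unitCube hx fun j => (q j : ℝ))
      simp only [Function.update_self]
      exact ⟨⟨by linarith [hA.2], by linarith [hA.1]⟩, hnear⟩
    · simpa [hj] using hx j (mem_univ j)
  calc volume (unitCube z ∩ {x | ∑ j, (q j : ℝ) * x j ∈ nearIntegers ε})
      ≤ ENNReal.ofReal |(q i : ℝ)|⁻¹ * volume (Icc (A - L) (A + L) ∩ nearIntegers ε) := by
        refine (measure_mono hsub).trans_eq ?_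
        rw [volume_preimage_update_pi (q := fun j => (q j : ℝ)) (abs_pos.1 (one_pos.trans_le hqi)),
          Finset.prod_eq_single i (fun j _ hj => by simp [hj, Real.volume_Ico]) (by simp),
          Function.update_self]
    _ ≤ ENNReal.ofReal |(q i : ℝ)|⁻¹ * ENNReal.ofReal ((2 * L + 2 * ε + 1) * (2 * ε)) := by
        gcongr
        have hL₀ : 0 ≤ L := Finset.sum_nonneg fun j _ => abs_nonneg _
        exact (volume_Icc_inter_nearIntegers_le (by linarith) hε₀).trans_eq (by ring_nf)
    _ ≤ ENNReal.ofReal ((2 * Fintype.card ι + 3) * (2 * ε)) := by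
        rw [← ENNReal.ofReal_mul (by positivity)]
        refine ENNReal.ofReal_le_ofReal ?_
        rw [inv_mul_le_iff₀ (by positivity)]
        nlinarith

lemma volume_unitCube_inter_exists_nearIntegers_le [Fintype ι] (z : ι → ℤ) (n : ℕ)
    {ε : ℝ} (hε₀ : 0 ≤ ε) (hε₁ : ε ≤ 1) :
    volume (unitCube z ∩ {x | ∃ q : ι → ℤ, q ≠ 0 ∧ (∀ j, |q j| ≤ n) ∧
        ∑ j, (q j : ℝ) * x j ∈ nearIntegers ε}) ≤
      (2 * n + 1) ^ Fintype.card ι * ENNReal.ofReal ((2 * Fintype.card ι + 3) * (2 * ε)) := by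
  classical
  set box := Fintype.piFinset fun _ : ι => Finset.Icc (-(n : ℤ)) n
  have hsub : unitCube z ∩ {x | ∃ q : ι → ℤ, q ≠ 0 ∧ (∀ j, |q j| ≤ n) ∧
        ∑ j, (q j : ℝ) * x j ∈ nearIntegers ε} ⊆
      ⋃ q ∈ box.erase 0, unitCube z ∩ {x | ∑ j, (q j : ℝ) * x j ∈ nearIntegers ε} := by
    rintro x ⟨hx, q, hq, hqn, hnear⟩
    refine mem_biUnion (Finset.mem_erase.2 ⟨hq, ?_⟩) ⟨hx, hnear⟩
    exact Fintype.mem_piFinset.2 fun j => Finset.mem_Icc.2 (abs_le.1 (hqn j))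
  have hcard : ((box.erase 0).card : ℝ≥0∞) ≤ (2 * n + 1) ^ Fintype.card ι := by
    have : box.card = (2 * n + 1) ^ Fintype.card ι := by
      have hIcc : (Finset.Icc (-(n : ℤ)) n).card = 2 * n + 1 := by rw [Int.card_Icc]; omega
      simp [box, Fintype.card_piFinset, hIcc]
    exact_mod_cast (Finset.card_erase_le).trans this.le
  calc _ ≤ ∑ q ∈ box.erase 0, volume (unitCube z ∩ {x | ∑ j, (q j : ℝ) * x j ∈ nearIntegers ε}) :=
        (measure_mono hsub).trans (measure_biUnion_finset_le _ _)
    _ ≤ ∑ _q ∈ box.erase 0, ENNReal.ofReal ((2 * Fintype.card ι + 3) * (2 * ε)) :=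
        Finset.sum_le_sum fun q hq =>
          volume_unitCube_inter_nearIntegers_le (Finset.ne_of_mem_erase hq) z hε₀ hε₁
    _ ≤ _ := by
        rw [Finset.sum_const, nsmul_eq_mul]
        gcongr

def IsSingularVector [Fintype ι] (x : ι → ℝ) : Prop :=
  ∀ c : ℝ, 0 < c → ∃ T₀ : ℝ, ∀ T : ℝ, T₀ ≤ T →
    ∃ (p : ℤ) (q : ι → ℤ), q ≠ 0 ∧ (∀ i, (|q i| : ℝ) ≤ T) ∧
      |(∑ i, (q i : ℝ) * x i) + (p : ℝ)| < c / T ^ Fintype.card ι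

lemma volume_unitCube_inter_isSingularVector_le [Fintype ι] (z : ι → ℤ) {c : ℝ}
    (hc₀ : 0 < c) (hc₁ : c ≤ 1) :
    volume (unitCube z ∩ {x | IsSingularVector x}) ≤
      ENNReal.ofReal (3 ^ Fintype.card ι * ((2 * Fintype.card ι + 3) * 2) * c) := by
  set d := Fintype.card ι
  refine measure_le_of_subset_iUnion_iInter
    (G := fun n : ℕ => unitCube z ∩ {x | ∃ q : ι → ℤ, q ≠ 0 ∧ (∀ j, |q j| ≤ n) ∧
        ∑ j, (q j : ℝ) * x j ∈ nearIntegers (c / n ^ d)}) ?_ ?_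
  · rintro x ⟨hxz, hx⟩
    obtain ⟨T₀, hT₀⟩ := hx c hc₀
    obtain ⟨N, hN⟩ := exists_nat_ge T₀
    refine mem_iUnion.2 ⟨N, mem_iInter₂.2 fun n hn => ?_⟩
    obtain ⟨p, q, hq, hqn, hlt⟩ := hT₀ n (hN.trans (by exact_mod_cast hn))
    exact ⟨hxz, q, hq, fun j => by exact_mod_cast hqn j, p, hlt⟩
  · refine (eventually_ge_atTop 1).frequently.mono fun n hn => ?_
    have hn₁ : (1 : ℝ) ≤ n := by exact_mod_cast hn
    have hpow : (1 : ℝ) ≤ n ^ d := one_le_pow₀ hn₁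
    refine (volume_unitCube_inter_exists_nearIntegers_le z n (by positivity)
      ((div_le_one (by positivity)).2 (hc₁.trans hpow))).trans ?_
    have hcast : (2 * n + 1 : ℝ≥0∞) ^ d = ENNReal.ofReal ((2 * n + 1) ^ d) := by
      rw [ENNReal.ofReal_pow (by positivity)]
      norm_cast
    rw [hcast, ← ENNReal.ofReal_mul (by positivity)]
    refine ENNReal.ofReal_le_ofReal ?_
    calc (2 * n + 1 : ℝ) ^ d * ((2 * d + 3) * (2 * (c / n ^ d)))
        = ((2 * n + 1) / n) ^ d * ((2 * d + 3) * 2 * c) := by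
          rw [div_pow]
          ring
      _ ≤ 3 ^ d * ((2 * d + 3) * 2 * c) := by
          gcongr
          rw [div_le_iff₀ (by positivity)]
          linarith
      _ = 3 ^ d * ((2 * d + 3) * 2) * c := by ring
end UnitCube

theorem volume_setOf_isSingularVector (ι : Type*) [Fintype ι] :
    volume {x : ι → ℝ | IsSingularVector x} = 0 := by
  rw [← univ_inter {x | IsSingularVector x}, ← iUnion_unitCube, iUnion_inter]
  exact measure_iUnion_null fun z => ENNReal.eq_zero_of_forall_le_ofReal_mul fun _ hc₀ hc₁ =>
    volume_unitCube_inter_isSingularVector_le z hc₀ hc₁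

/-- The set of singular vectors in `ℝ^m` has Lebesgue measure zero. -/
theorem singular_set_measure_zero (m : ℕ) :
    volume {x : Fin m → ℝ | ∀ c : ℝ, 0 < c → ∃ T₀ : ℝ, ∀ T : ℝ, T₀ ≤ T →
      ∃ (p : ℤ) (q : Fin m → ℤ), q ≠ 0 ∧ (∀ i, (|q i| : ℝ) ≤ T) ∧
        |(∑ i, (q i : ℝ) * x i) + (p : ℝ)| < c / T ^ m} = 0 := by
  simpa only [IsSingularVector, Fintype.card_fin] using volume_setOf_isSingularVector (Fin m)
end

section
/- Let G = SL_{m+1}(ℝ), Γ = SL_{m+1}(ℤ), g_t = diag(e^{mt}, e^{-t}, …, e^{-t}), and for x ∈ ℝ^m let u_x be the unipotent matrix with first row (1, x) and identity below. Then x is singular (for every c > 0 and all large T there exist p ∈ ℤ, nonzero q ∈ ℤ^m with |q·x+p| < c/T^m, ‖q‖ ≤ T) if and only if for every ε > 0 there exists t_ε such that for all t ≥ t_ε the lattice g_t u_x ℤ^{m+1} contains a nonzero vector of sup norm less than ε. -/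
/-!
Both conditions say that `|q·x + p|` and `‖q‖` can be made small simultaneously, measured on two
scales linked by the substitution `T = δ eᵗ`: under it `eᵐᵗ |q·x + p| < ε` becomes
`|q·x + p| < ε δᵐ / Tᵐ` and `e⁻ᵗ |qᵢ| ≤ δ` becomes `|qᵢ| ≤ T`. Taking `δ = ε / 2` turns a singular
approximation at height `T` into a short lattice vector at time `t`; conversely `δ = 1` turns a short
vector into an approximation, and `q ≠ 0` because for `t ≥ 0` a vector `(p, 0)` with `p ≠ 0` has first
coordinate `eᵐᵗ |p| ≥ 1`.
-/

open Filter Real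

namespace Dani

def Singular (m : ℕ) (x : Fin m → ℝ) : Prop :=
  ∀ c : ℝ, 0 < c → ∃ T₀ : ℝ, ∀ T : ℝ, T₀ ≤ T →
    ∃ (p : ℤ) (q : Fin m → ℤ), q ≠ 0 ∧ (∀ i, (|q i| : ℝ) ≤ T) ∧
      |(∑ i, (q i : ℝ) * x i) + (p : ℝ)| < c / T ^ m

/-- `(eᵐᵗ (q·x + p), e⁻ᵗ q)` is the vector `g_t u_x (p, q)` of the lattice `g_t u_x ℤ^{m+1}`. -/
def DivergentTrajectory (m : ℕ) (x : Fin m → ℝ) : Prop :=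
  ∀ ε : ℝ, 0 < ε → ∃ t₀ : ℝ, ∀ t : ℝ, t₀ ≤ t →
    ∃ (p : ℤ) (q : Fin m → ℤ), ¬ (p = 0 ∧ q = 0) ∧
      exp (m * t) * |(∑ i, (q i : ℝ) * x i) + (p : ℝ)| < ε ∧
      (∀ i, exp (-t) * |(q i : ℝ)| < ε)

theorem exp_nat_mul_mul_lt_iff {δ : ℝ} (hδ : 0 < δ) (m : ℕ) (t a ε : ℝ) :
    exp (m * t) * a < ε ↔ a < ε * δ ^ m / (δ * exp t) ^ m := by
  have hδm : δ ^ m ≠ 0 := pow_ne_zero m hδ.ne'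
  rw [mul_pow, ← exp_nat_mul, mul_comm (δ ^ m), mul_div_mul_right _ _ hδm, mul_comm,
    lt_div_iff₀ (exp_pos _)]

theorem exp_neg_mul_le_iff (t b δ : ℝ) : exp (-t) * b ≤ δ ↔ b ≤ δ * exp t := by
  rw [exp_neg, inv_mul_le_iff₀ (exp_pos t), mul_comm]

theorem one_le_exp_nat_mul_mul_abs {t : ℝ} (ht : 0 ≤ t) (m : ℕ) {p : ℤ} (hp : p ≠ 0) :
    1 ≤ exp (m * t) * |(p : ℝ)| :=
  one_le_mul_of_one_le_of_one_le (one_le_exp (by positivity)) (by exact_mod_cast Int.one_le_abs hp)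

theorem divergentTrajectory_of_singular {m : ℕ} {x : Fin m → ℝ} (hx : Singular m x) :
    DivergentTrajectory m x := by
  intro ε hε
  have hδ : 0 < ε / 2 := half_pos hε
  obtain ⟨T₀, hT₀⟩ := hx (ε * (ε / 2) ^ m) (by positivity)
  obtain ⟨t₀, ht₀⟩ := eventually_atTop.1 <|
    (tendsto_exp_atTop.const_mul_atTop hδ).eventually_ge_atTop T₀
  refine ⟨t₀, fun t ht => ?_⟩
  obtain ⟨p, q, hq, hqT, hpq⟩ := hT₀ _ (ht₀ t ht)
  refine ⟨p, q, fun h => hq h.2, (exp_nat_mul_mul_lt_iff hδ m t _ ε).2 hpq, fun i => ?_⟩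
  have hqi : exp (-t) * |(q i : ℝ)| ≤ ε / 2 :=
    (exp_neg_mul_le_iff t _ _).2 (hqT i)
  exact hqi.trans_lt (half_lt_self hε)

theorem singular_of_divergentTrajectory {m : ℕ} {x : Fin m → ℝ} (hx : DivergentTrajectory m x) :
    Singular m x := by
  intro c hc
  set ε := min 1 c
  obtain ⟨t₀, ht₀⟩ := hx ε (lt_min one_pos hc)
  refine ⟨exp (max t₀ 0), fun T hT₀ => ?_⟩
  have hT : 0 < T := (exp_pos _).trans_le hT₀
  have ht : max t₀ 0 ≤ log T := (le_log_iff_exp_le hT).2 hT₀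
  obtain ⟨p, q, hpq, hsmall, hqi⟩ := ht₀ (log T) ((le_max_left _ _).trans ht)
  have hq : q ≠ 0 := by
    rintro rfl
    have hp : p ≠ 0 := fun hp => hpq ⟨hp, rfl⟩
    have := one_le_exp_nat_mul_mul_abs ((le_max_right _ _).trans ht) m hp
    simp only [Pi.zero_apply, Int.cast_zero, zero_mul, Finset.sum_const_zero, zero_add] at hsmall
    linarith [min_le_left 1 c]
  refine ⟨p, q, hq, fun i => ?_, ?_⟩
  · have := (exp_neg_mul_le_iff _ _ 1).1 ((hqi i).le.trans (min_le_left 1 c))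
    rwa [one_mul, exp_log hT] at this
  · have := (exp_nat_mul_mul_lt_iff one_pos m (log T) _ ε).1 hsmall
    rw [one_pow, mul_one, one_mul, exp_log hT] at this
    exact this.trans_le (div_le_div_of_nonneg_right (min_le_right 1 c) (by positivity))

end Dani

theorem dani_correspondence_general (m : ℕ) (x : Fin m → ℝ) :
    (∀ c : ℝ, 0 < c → ∃ T₀ : ℝ, ∀ T : ℝ, T₀ ≤ T →
      ∃ (p : ℤ) (q : Fin m → ℤ), q ≠ 0 ∧ (∀ i, (|q i| : ℝ) ≤ T) ∧
        |(∑ i, (q i : ℝ) * x i) + (p : ℝ)| < c / T ^ m) ↔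
    (∀ ε : ℝ, 0 < ε → ∃ t₀ : ℝ, ∀ t : ℝ, t₀ ≤ t →
      ∃ (p : ℤ) (q : Fin m → ℤ), ¬ (p = 0 ∧ q = 0) ∧
        Real.exp (m * t) * |(∑ i, (q i : ℝ) * x i) + (p : ℝ)| < ε ∧
        (∀ i, Real.exp (-t) * |(q i : ℝ)| < ε)) :=
  ⟨Dani.divergentTrajectory_of_singular, Dani.singular_of_divergentTrajectory⟩

/-- Dani correspondence: `x ∈ ℝ^m` is singular if and only if for every `ε > 0` and
all sufficiently large `t`, the lattice `g_t u_x ℤ^{m+1}` contains a nonzero vector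
of sup norm less than `ε`; here the vector of `g_t u_x` applied to `(p, q)` has first
coordinate `e^{mt}(q·x + p)` and remaining coordinates `e^{-t} q_i`. -/
theorem dani_correspondence (m : ℕ) (hm : 0 < m) (x : Fin m → ℝ) :
    (∀ c : ℝ, 0 < c → ∃ T₀ : ℝ, ∀ T : ℝ, T₀ ≤ T →
      ∃ (p : ℤ) (q : Fin m → ℤ), q ≠ 0 ∧ (∀ i, (|q i| : ℝ) ≤ T) ∧
        |(∑ i, (q i : ℝ) * x i) + (p : ℝ)| < c / T ^ m) ↔
    (∀ ε : ℝ, 0 < ε → ∃ t₀ : ℝ, ∀ t : ℝ, t₀ ≤ t →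
      ∃ (p : ℤ) (q : Fin m → ℤ), ¬ (p = 0 ∧ q = 0) ∧
        Real.exp (m * t) * |(∑ i, (q i : ℝ) * x i) + (p : ℝ)| < ε ∧
        (∀ i, Real.exp (-t) * |(q i : ℝ)| < ε)) :=
  dani_correspondence_general m x
end

section
/- Let x ∈ ℝ^m and suppose that for some ε > 0 there is a sequence t_k → ∞ such that every nonzero vector v of the lattice g_{t_k} u_x ℤ^{m+1} satisfies ‖v‖ ≥ ε (with g_t = diag(e^{mt}, e^{-t},…,e^{-t}) and u_x unipotent with top row (1, x)). Then x is not singular: there exists c > 0 and a sequence Q_k → ∞ such that the system |q·x + p| < c/Q_k^m, 0 < ‖q‖ ≤ Q_k has no integer solution. -/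
open Real Filter

lemma div_mul_exp_pow {δ : ℝ} (hδ : δ ≠ 0) (ε s : ℝ) (m : ℕ) :
    ε * δ ^ m / (δ * exp s) ^ m = ε / exp (m * s) := by
  rw [mul_pow, ← exp_nat_mul]
  field_simp

lemma exp_neg_mul_le_of_le_mul_exp {a δ s : ℝ} (h : a ≤ δ * exp s) : exp (-s) * a ≤ δ := by
  rw [exp_neg, inv_mul_le_iff₀ (exp_pos s), mul_comm]
  exact h

theorem nondivergent_implies_not_singular_general (m : ℕ) (x : Fin m → ℝ)
    (ε : ℝ) (hε : 0 < ε) (t : ℕ → ℝ)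
    (ht : Filter.Tendsto t Filter.atTop Filter.atTop)
    (h : ∀ k, ∀ (p : ℤ) (q : Fin m → ℤ), ¬ (p = 0 ∧ q = 0) →
      ε ≤ Real.exp (m * t k) * |(∑ i, (q i : ℝ) * x i) + (p : ℝ)| ∨
      ∃ i, ε ≤ Real.exp (-(t k)) * |(q i : ℝ)|) :
    ∃ c : ℝ, 0 < c ∧ ∃ Q : ℕ → ℝ, Filter.Tendsto Q Filter.atTop Filter.atTop ∧
      ∀ k, ¬ ∃ (p : ℤ) (q : Fin m → ℤ), q ≠ 0 ∧ (∀ i, (|q i| : ℝ) ≤ Q k) ∧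
        |(∑ i, (q i : ℝ) * x i) + (p : ℝ)| < c / (Q k) ^ m := by
  -- `Q k = ε e^{t k}` would only give `e^{-t k} |q i| ≤ ε`; halving makes it strict.
  refine ⟨ε * (ε / 2) ^ m, by positivity, fun k => ε / 2 * exp (t k),
    (tendsto_exp_atTop.comp ht).const_mul_atTop (by positivity), ?_⟩
  rintro k ⟨p, q, hq, hqQ, hsmall⟩
  rw [div_mul_exp_pow (by positivity)] at hsmall
  rcases h k p q (fun hpq => hq hpq.2) with hlinear | ⟨i, hqi⟩
  · rw [lt_div_iff₀ (exp_pos _), mul_comm] at hsmall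
    linarith
  · have hqi_small := exp_neg_mul_le_of_le_mul_exp (hqQ i)
    linarith

/-- One direction of the Dani correspondence: if along a sequence `t_k → ∞` every
nonzero vector of the lattice `g_{t_k} u_x ℤ^{m+1}` has sup norm at least `ε`, then
`x` is not singular. -/
theorem nondivergent_implies_not_singular (m : ℕ) (hm : 0 < m) (x : Fin m → ℝ)
    (ε : ℝ) (hε : 0 < ε) (t : ℕ → ℝ)
    (ht : Filter.Tendsto t Filter.atTop Filter.atTop)
    (h : ∀ k, ∀ (p : ℤ) (q : Fin m → ℤ), ¬ (p = 0 ∧ q = 0) →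
      ε ≤ Real.exp (m * t k) * |(∑ i, (q i : ℝ) * x i) + (p : ℝ)| ∨
      ∃ i, ε ≤ Real.exp (-(t k)) * |(q i : ℝ)|) :
    ∃ c : ℝ, 0 < c ∧ ∃ Q : ℕ → ℝ, Filter.Tendsto Q Filter.atTop Filter.atTop ∧
      ∀ k, ¬ ∃ (p : ℤ) (q : Fin m → ℤ), q ≠ 0 ∧ (∀ i, (|q i| : ℝ) ≤ Q k) ∧
        |(∑ i, (q i : ℝ) * x i) + (p : ℝ)| < c / (Q k) ^ m :=
  nondivergent_implies_not_singular_general m x ε hε t ht h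
end

section
/- Any polynomial f ∈ ℝ[x] of degree at most k is (C, 1/k)-good on ℝ with respect to Lebesgue measure for some constant C = C(k) depending only on k; explicitly, for every interval B and ε > 0, λ({x ∈ B : |f(x)| < ε}) ≤ C(k) (ε / sup_{x∈B} |f(x)|)^{1/k} λ(B). -/
/-!
Over `ℂ`, `|f x| = |c| ∏ |x - z|`, with `z` running over the roots of `f` and `c` its leading
coefficient. On the ball `B = B(a, r)` each factor is at most `r + |z - a|`, so `sup_B |f|` is at
most `Q = |c| ∏ (r + |z - a|)`. Put `t = (ε / Q) ^ (1 / k)`. If `t < 1` and `|f x| < ε`, some root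
satisfies `|x - z| < t (r + |z - a|)`, since otherwise `|f x| ≥ t ^ (deg f) Q ≥ t ^ k Q = ε`.
For a single root this confines `x` to a set of measure at most `3 t |B|`, because a root with
`|z - a| ≥ 2r` stays at distance at least `(r + |z - a|) / 3` from `B`. Summing over at most `k`
roots gives `C(k) = 3k`.
-/

open MeasureTheory Polynomial

namespace Polynomial

theorem norm_eval_eq_prod_roots {K : Type*} [NormedField K] [IsAlgClosed K] (p : K[X]) (x : K) :
    ‖p.eval x‖ = ‖p.leadingCoeff‖ * (p.roots.map (dist x)).prod := by
  rw [(IsAlgClosed.splits p).eval_eq_prod_roots, norm_mul]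
  exact congrArg _ ((map_multiset_prod (normHom : K →*₀ ℝ) _).trans (by simp [dist_eq_norm]))

noncomputable def ballBound (p : ℂ[X]) (c : ℂ) (r : ℝ) : ℝ :=
  ‖p.leadingCoeff‖ * (p.roots.map fun z => r + dist z c).prod

theorem ballBound_pos {p : ℂ[X]} (hp : p ≠ 0) (c : ℂ) {r : ℝ} (hr : 0 < r) :
    0 < ballBound p c r :=
  mul_pos (norm_pos_iff.2 (leadingCoeff_ne_zero.2 hp))
    (Multiset.prod_pos fun _ h => by obtain ⟨z, -, rfl⟩ := Multiset.mem_map.1 h; positivity)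

theorem norm_eval_le_ballBound (p : ℂ[X]) {c x : ℂ} {r : ℝ} (hx : x ∈ Metric.closedBall c r) :
    ‖p.eval x‖ ≤ ballBound p c r := by
  rw [norm_eval_eq_prod_roots, ballBound]
  refine mul_le_mul_of_nonneg_left (Multiset.prod_map_le_prod_map₀ _ _
    (fun _ _ => dist_nonneg) fun z _ => ?_) (norm_nonneg _)
  calc dist x z ≤ dist x c + dist z c := dist_triangle_right x z c
    _ ≤ r + dist z c := by gcongr; exact hx

theorem pow_mul_ballBound_le_norm_eval (p : ℂ[X]) (c x : ℂ) {r t : ℝ} (hr : 0 ≤ r) (ht : 0 ≤ t)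
    (h : ∀ z ∈ p.roots, t * (r + dist z c) ≤ dist x z) :
    t ^ Multiset.card p.roots * ballBound p c r ≤ ‖p.eval x‖ := by
  rw [norm_eval_eq_prod_roots, ballBound, mul_left_comm]
  refine mul_le_mul_of_nonneg_left ?_ (norm_nonneg _)
  calc t ^ Multiset.card p.roots * (p.roots.map fun z => r + dist z c).prod
      = (p.roots.map fun z => t * (r + dist z c)).prod := by
        rw [Multiset.prod_map_mul, Multiset.map_const', Multiset.prod_replicate]
    _ ≤ (p.roots.map (dist x)).prod :=
        Multiset.prod_map_le_prod_map₀ _ _ (fun _ _ => by positivity) h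

theorem volume_setOf_dist_lt_le (a r : ℝ) (z : ℂ) {t : ℝ} (ht : 0 ≤ t) :
    volume {x ∈ Metric.ball a r | dist (x : ℂ) z < t * (r + dist z a)} ≤
      ENNReal.ofReal (3 * t) * volume (Metric.ball a r) := by
  rcases le_or_gt (dist z a) (2 * r) with hnear | hfar
  · calc volume {x ∈ Metric.ball a r | dist (x : ℂ) z < t * (r + dist z a)}
        ≤ volume (Metric.ball z.re (t * (r + dist z a))) := measure_mono fun x hx =>
          (Complex.abs_re_le_norm ((x : ℂ) - z)).trans_lt (by simpa [← dist_eq_norm] using hx.2)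
      _ ≤ ENNReal.ofReal (3 * t * (2 * r)) := by
          rw [Real.volume_ball]
          exact ENNReal.ofReal_le_ofReal (by nlinarith)
      _ = ENNReal.ofReal (3 * t) * volume (Metric.ball a r) := by
          rw [Real.volume_ball, ENNReal.ofReal_mul (by positivity)]
  rcases le_or_gt t (1 / 3) with hsmall | hlarge
  · have hempty : {x ∈ Metric.ball a r | dist (x : ℂ) z < t * (r + dist z a)} = ∅ := by
      refine Set.eq_empty_of_forall_notMem fun x ⟨hx, hxz⟩ => ?_
      have hxa : dist (x : ℂ) a < r := by rwa [Complex.isometry_ofReal.dist_eq]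
      have htri := dist_triangle_left z (a : ℂ) (x : ℂ)
      have : t * (r + dist z a) ≤ 1 / 3 * (r + dist z a) :=
        mul_le_mul_of_nonneg_right hsmall (by linarith [dist_nonneg (x := (x : ℂ)) (y := a)])
      linarith
    rw [hempty, measure_empty]
    exact zero_le
  · calc volume {x ∈ Metric.ball a r | dist (x : ℂ) z < t * (r + dist z a)}
        ≤ volume (Metric.ball a r) := measure_mono (Set.sep_subset _ _)
      _ ≤ ENNReal.ofReal (3 * t) * volume (Metric.ball a r) :=
          le_mul_of_one_le_left zero_le (ENNReal.one_le_ofReal.2 (by linarith))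

theorem volume_sublevel_le_ballBound {p : ℂ[X]} (hp : p ≠ 0) {k : ℕ} (hk : 0 < k)
    (hdeg : p.natDegree ≤ k) (a : ℝ) {r ε : ℝ} (hr : 0 < r) (hε : 0 < ε) :
    volume {x ∈ Metric.ball a r | ‖p.eval (x : ℂ)‖ < ε} ≤
      ENNReal.ofReal (3 * k * (ε / ballBound p a r) ^ ((1 : ℝ) / k)) *
        volume (Metric.ball a r) := by
  have hQ := ballBound_pos hp a hr
  set t := (ε / ballBound p a r) ^ ((1 : ℝ) / k) with ht_def
  have ht : 0 < t := by positivity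
  have hcard : Multiset.card p.roots ≤ k := (card_roots' p).trans hdeg
  rcases le_or_gt 1 t with hbig | hsmall
  · calc volume {x ∈ Metric.ball a r | ‖p.eval (x : ℂ)‖ < ε}
        ≤ volume (Metric.ball a r) := measure_mono (Set.sep_subset _ _)
      _ ≤ _ := le_mul_of_one_le_left zero_le (ENNReal.one_le_ofReal.2 (by
          have : (1 : ℝ) ≤ k := by exact_mod_cast hk
          nlinarith))
  have htk : t ^ k = ε / ballBound p a r := by
    rw [ht_def, one_div, Real.rpow_inv_natCast_pow (by positivity) hk.ne']
  have hcover : {x ∈ Metric.ball a r | ‖p.eval (x : ℂ)‖ < ε} ⊆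
      ⋃ z ∈ p.roots.toFinset, {x ∈ Metric.ball a r | dist (x : ℂ) z < t * (r + dist z a)} := by
    rintro x ⟨hx, hxε⟩
    simp only [Set.mem_iUnion, Multiset.mem_toFinset, exists_prop, Set.mem_ofPred_eq]
    by_contra! hfar
    have hlow := pow_mul_ballBound_le_norm_eval p a x hr.le ht.le fun z hz => hfar z hz hx
    have : ε ≤ t ^ Multiset.card p.roots * ballBound p a r := by
      rw [← div_le_iff₀ hQ, ← htk]
      exact pow_le_pow_of_le_one ht.le hsmall.le hcard
    linarith
  calc volume {x ∈ Metric.ball a r | ‖p.eval (x : ℂ)‖ < ε}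
      ≤ ∑ z ∈ p.roots.toFinset,
          volume {x ∈ Metric.ball a r | dist (x : ℂ) z < t * (r + dist z a)} :=
        (measure_mono hcover).trans (measure_biUnion_finset_le _ _)
    _ ≤ ∑ _z ∈ p.roots.toFinset, ENNReal.ofReal (3 * t) * volume (Metric.ball a r) :=
        Finset.sum_le_sum fun z _ => volume_setOf_dist_lt_le a r z ht.le
    _ ≤ k * (ENNReal.ofReal (3 * t) * volume (Metric.ball a r)) := by
        rw [Finset.sum_const, nsmul_eq_mul]
        gcongr
        exact_mod_cast (Multiset.toFinset_card_le _).trans hcard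
    _ = ENNReal.ofReal (3 * k * t) * volume (Metric.ball a r) := by
        rw [← mul_assoc, ← ENNReal.ofReal_natCast, ← ENNReal.ofReal_mul (by positivity),
          mul_left_comm, ← mul_assoc]

theorem iSup_abs_eval_ball_pos {f : ℝ[X]} (hf : f ≠ 0) (a : ℝ) {r : ℝ} (hr : 0 < r) :
    0 < ⨆ x ∈ Metric.ball a r, |f.eval x| := by
  obtain ⟨x, hx, hfx⟩ : ∃ x ∈ Metric.ball a r, f.eval x ≠ 0 := by
    have hinf : (Metric.ball a r).Infinite := by
      rw [Real.ball_eq_Ioo]; exact Set.Ioo_infinite (by linarith)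
    exact (hinf.sdiff (finite_setOfPred_isRoot hf)).nonempty
  obtain ⟨C, hC⟩ := (isCompact_closedBall a r).exists_bound_of_continuousOn
    f.continuous.continuousOn
  have hbdd : BddAbove (⋃ y, Set.range fun (_ : y ∈ Metric.ball a r) => |f.eval y|) := by
    refine ⟨C, ?_⟩
    rintro _ ⟨_, ⟨y, rfl⟩, ⟨hy, rfl⟩⟩
    exact hC y (Metric.ball_subset_closedBall hy)
  exact (abs_pos.2 hfx).trans_le
    (le_ciSup₂ (f := fun y (_ : y ∈ Metric.ball a r) => |f.eval y|) hbdd x hx)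

end Polynomial

/-- Any nonzero real polynomial of degree at most `k` is `(C(k), 1/k)`-good on `ℝ`
with respect to Lebesgue measure, for some constant `C(k)` depending only on `k`. -/
theorem polynomial_good (k : ℕ) (hk : 0 < k) :
    ∃ C : ℝ, 0 < C ∧ ∀ f : Polynomial ℝ, f ≠ 0 → f.natDegree ≤ k →
      ∀ (a r : ℝ), 0 < r → ∀ ε : ℝ, 0 < ε →
        volume {x ∈ Metric.ball a r | |f.eval x| < ε} ≤
          ENNReal.ofReal (C * (ε / ⨆ x ∈ Metric.ball a r, |f.eval x|) ^ ((1 : ℝ) / k)) *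
            volume (Metric.ball a r) := by
  refine ⟨3 * k, by positivity, fun f hf hdeg a r hr ε hε => ?_⟩
  set p := f.map (algebraMap ℝ ℂ)
  have hp : p ≠ 0 := map_ne_zero hf
  have hQ := ballBound_pos hp a hr
  have heval : ∀ x : ℝ, ‖p.eval (x : ℂ)‖ = |f.eval x| := fun x => by
    rw [eval_map_algebraMap, ← Complex.coe_algebraMap, aeval_algebraMap_apply, coe_aeval_eq_eval,
      Complex.coe_algebraMap, Complex.norm_real, Real.norm_eq_abs]
  have hsup : ⨆ x ∈ Metric.ball a r, |f.eval x| ≤ ballBound p a r := by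
    refine Real.iSup_le (fun x => Real.iSup_le (fun hx => ?_) hQ.le) hQ.le
    rw [← heval]
    refine norm_eval_le_ballBound p (Metric.ball_subset_closedBall ?_)
    rwa [Metric.mem_ball, Complex.isometry_ofReal.dist_eq]
  have key := volume_sublevel_le_ballBound hp hk (by rwa [natDegree_map]) a hr hε
  simp only [heval] at key
  refine key.trans (mul_le_mul_left (ENNReal.ofReal_le_ofReal ?_) _)
  have hM := iSup_abs_eval_ball_pos hf a hr
  gcongr
end

section
/- Let M be a connected real analytic submanifold of ℝ^m. If M is covered by a countable union of sets of the form M ∩ H_i, where each H_i is an affine hyperplane, then M is contained in a single affine hyperplane H_{i_0}. -/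
/-!
The hyperplane sections `M ∩ H_i` are zero sets of the analytic functions
`x ↦ ⟪a_i, f x⟫ - b_i` on `U`. An open subset of `ℝⁿ` is a Baire space, so one of these
countably many closed zero sets has interior in `U`; by the identity theorem on the connected
set `U`, the corresponding function then vanishes on all of `U`.
-/

open Filter Set Topology

theorem IsOpen.exists_eventuallyEq_zero_of_forall_exists_eq_zero {X F ι : Type*}
    [TopologicalSpace X] [BaireSpace X] [TopologicalSpace F] [T1Space F] [Zero F] [Countable ι]
    {U : Set X} {g : ι → X → F} (hU : IsOpen U) (hne : U.Nonempty)
    (hg : ∀ i, ContinuousOn (g i) U) (hcov : ∀ x ∈ U, ∃ i, g i x = 0) :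
    ∃ i, ∃ x ∈ U, g i =ᶠ[𝓝 x] 0 := by
  have : BaireSpace U := hU.baireSpace
  have : Nonempty U := hne.to_subtype
  obtain ⟨i, x, hx⟩ := nonempty_interior_of_iUnion_of_closed (f := fun i => {x : U | g i x = 0})
    (fun i => isClosed_singleton.preimage (hg i).domRestrict)
    (eq_univ_of_forall fun x => mem_iUnion.2 (hcov x x.2))
  refine ⟨i, x, x.2, ?_⟩
  rw [← hU.isOpenEmbedding_subtypeVal.map_nhds_eq, EventuallyEq, eventually_map]
  exact mem_interior_iff_mem_nhds.1 hx

theorem AnalyticOnNhd.exists_eqOn_zero_of_forall_exists_eq_zero {𝕜 E F ι : Type*}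
    [NontriviallyNormedField 𝕜] [NormedAddCommGroup E] [NormedSpace 𝕜 E] [BaireSpace E]
    [NormedAddCommGroup F] [NormedSpace 𝕜 F] [Countable ι] {U : Set E} {g : ι → E → F}
    (hg : ∀ i, AnalyticOnNhd 𝕜 (g i) U) (hU : IsOpen U) (hUc : IsConnected U)
    (hcov : ∀ x ∈ U, ∃ i, g i x = 0) :
    ∃ i, EqOn (g i) 0 U := by
  obtain ⟨i, x, hx, hgx⟩ := hU.exists_eventuallyEq_zero_of_forall_exists_eq_zero hUc.nonempty
    (fun i => (hg i).continuousOn) hcov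
  exact ⟨i, (hg i).eqOn_zero_of_preconnected_of_eventuallyEq_zero hUc.isPreconnected hx hgx⟩

theorem analytic_image_covered_by_hyperplanes_general (n m : ℕ) (U : Set (Fin n → ℝ))
    (hUo : IsOpen U) (hUc : IsConnected U)
    (f : (Fin n → ℝ) → (Fin m → ℝ)) (hf : AnalyticOnNhd ℝ f U)
    (a : ℕ → Fin m → ℝ) (b : ℕ → ℝ)
    (hcover : f '' U ⊆ ⋃ i : ℕ, {y : Fin m → ℝ | ∑ j, a i j * y j = b i}) :
    ∃ i₀ : ℕ, f '' U ⊆ {y : Fin m → ℝ | ∑ j, a i₀ j * y j = b i₀} := by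
  have hg (i : ℕ) : AnalyticOnNhd ℝ (fun x => ∑ j, a i j * f x j - b i) U :=
    (Finset.analyticOnNhd_fun_sum _ fun j _ =>
      analyticOnNhd_const.mul (analyticOnNhd_pi_iff.1 hf j)).sub analyticOnNhd_const
  obtain ⟨i₀, hi₀⟩ := AnalyticOnNhd.exists_eqOn_zero_of_forall_exists_eq_zero hg hUo hUc
    fun x hx => by
      obtain ⟨i, hi⟩ := mem_iUnion.1 (hcover (mem_image_of_mem f hx))
      exact ⟨i, sub_eq_zero.2 hi⟩
  refine ⟨i₀, ?_⟩
  rintro _ ⟨x, hx, rfl⟩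
  exact sub_eq_zero.1 (hi₀ hx)

/-- A connected real analytic submanifold of `ℝ^m` (presented as the image of a real
analytic map on a connected open set) which is covered by countably many affine
hyperplanes is contained in a single one of them. -/
theorem analytic_image_covered_by_hyperplanes (n m : ℕ) (U : Set (Fin n → ℝ))
    (hUo : IsOpen U) (hUc : IsConnected U)
    (f : (Fin n → ℝ) → (Fin m → ℝ)) (hf : AnalyticOnNhd ℝ f U)
    (a : ℕ → Fin m → ℝ) (b : ℕ → ℝ) (ha : ∀ i, a i ≠ 0)
    (hcover : f '' U ⊆ ⋃ i : ℕ, {y : Fin m → ℝ | ∑ j, a i j * y j = b i}) :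
    ∃ i₀ : ℕ, f '' U ⊆ {y : Fin m → ℝ | ∑ j, a i₀ j * y j = b i₀} :=
  analytic_image_covered_by_hyperplanes_general n m U hUo hUc f hf a b hcover
end
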